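/- Let C = F⃗ a F⃗ be a double coset of Jones' subgroup F⃗ in F, and let w = x_{i_1}⋯x_{i_n} (with i_1 ≤ ⋯ ≤ i_n and n = |w|) be a positive element of C whose length is minimal among the lengths of elements of C. Then w contains no block: no contiguous subword x_{i_p}⋯x_{i_q} (1 ≤ p ≤ q ≤ n) of w is a block. -/

import Mathlib

set_option maxHeartbeats 1000000

noncomputable section

/-- The unit interval `[0,1]` as a type. -/
abbrev I : Type := Set.Icc (0:ℝ) 1

/-- The underlying function of the generator `x₀` of Thompson's group `F`. -/
def x0fun (t : ℝ) : ℝ := if t ≤ 1/4 then 2*t else if t ≤ 1/2 then t + 1/4 else t/2 + 1/2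

/-- The inverse of `x0fun`. -/
def x0inv (t : ℝ) : ℝ := if t ≤ 1/2 then t/2 else if t ≤ 3/4 then t - 1/4 else 2*t - 1

/-- The underlying function of the generator `x₁` of Thompson's group `F`. -/
def x1fun (t : ℝ) : ℝ :=
  if t ≤ 1/2 then t else if t ≤ 5/8 then 2*t - 1/2 else if t ≤ 3/4 then t + 1/8 else t/2 + 1/2

/-- The inverse of `x1fun`. -/
def x1inv (t : ℝ) : ℝ :=
  if t ≤ 1/2 then t else if t ≤ 3/4 then t/2 + 1/4 else if t ≤ 7/8 then t - 1/8 else 2*t - 1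

/-- The generator `x₀` of Thompson's group `F`, as a bijection of `[0,1]`. -/
def x₀ : Equiv.Perm I where
  toFun t := ⟨x0fun t.1, by
    obtain ⟨h0, h1⟩ := Set.mem_Icc.mp t.2
    simp only [Set.mem_Icc, x0fun]
    split_ifs <;> constructor <;> linarith⟩
  invFun t := ⟨x0inv t.1, by
    obtain ⟨h0, h1⟩ := Set.mem_Icc.mp t.2
    simp only [Set.mem_Icc, x0inv]
    split_ifs <;> constructor <;> linarith⟩
  left_inv t := by
    obtain ⟨h0, h1⟩ := Set.mem_Icc.mp t.2
    apply Subtype.ext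
    show x0inv (x0fun t.1) = t.1
    simp only [x0fun, x0inv]
    split_ifs <;> linarith
  right_inv t := by
    obtain ⟨h0, h1⟩ := Set.mem_Icc.mp t.2
    apply Subtype.ext
    show x0fun (x0inv t.1) = t.1
    simp only [x0fun, x0inv]
    split_ifs <;> linarith

/-- The generator `x₁` of Thompson's group `F`, as a bijection of `[0,1]`. -/
def x₁ : Equiv.Perm I where
  toFun t := ⟨x1fun t.1, by
    obtain ⟨h0, h1⟩ := Set.mem_Icc.mp t.2
    simp only [Set.mem_Icc, x1fun]
    split_ifs <;> constructor <;> linarith⟩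
  invFun t := ⟨x1inv t.1, by
    obtain ⟨h0, h1⟩ := Set.mem_Icc.mp t.2
    simp only [Set.mem_Icc, x1inv]
    split_ifs <;> constructor <;> linarith⟩
  left_inv t := by
    obtain ⟨h0, h1⟩ := Set.mem_Icc.mp t.2
    apply Subtype.ext
    show x1inv (x1fun t.1) = t.1
    simp only [x1fun, x1inv]
    split_ifs <;> linarith
  right_inv t := by
    obtain ⟨h0, h1⟩ := Set.mem_Icc.mp t.2
    apply Subtype.ext
    show x1fun (x1inv t.1) = t.1
    simp only [x1fun, x1inv]
    split_ifs <;> linarith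

/-- Composition in Thompson's group `F` is from left to right: the product `f·g` in the paper
is the function `t ↦ g (f t)`.  In Lean, `Equiv.Perm` multiplication is composition from right
to left: `(f * g) t = f (g t)`.  Hence a paper product `a₁ a₂ ⋯ aₙ` corresponds to the Lean
product `aₙ * ⋯ * a₂ * a₁`.

`x i` is the standard generator `x_i` of Thompson's group `F`: here `x_0, x_1` are the explicit
piecewise-linear maps, and for `i ≥ 1`, `x_{i+1} = x_0^{-i} x_1 x_0^{i}` (left-to-right
composition), which in Lean's convention is `x₀ ^ i * x₁ * (x₀ ^ i)⁻¹`. -/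
def x (i : ℕ) : Equiv.Perm I := if i = 0 then x₀ else x₀ ^ (i-1) * x₁ * (x₀ ^ (i-1))⁻¹

/-- Thompson's group `F`, realized as the group of increasing piecewise-linear homeomorphisms of
`[0,1]` with dyadic breakpoints and slopes powers of 2; it is generated by `x_0` and `x_1`. -/
def F : Subgroup (Equiv.Perm I) := Subgroup.closure {x 0, x 1}

/-- The subgroup `G = ⟨x_0x_2, x_1x_2⟩` of `F` (products written left-to-right, so
`x_0x_2` is the Lean element `x 2 * x 0`). -/
def G : Subgroup (Equiv.Perm I) := Subgroup.closure {x 2 * x 0, x 2 * x 1}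

/-- Jones' subgroup `F⃗ = ⟨x_0x_1, x_1x_2, x_2x_3⟩` of `F` (products written left-to-right). -/
def JonesF : Subgroup (Equiv.Perm I) := Subgroup.closure {x 1 * x 0, x 2 * x 1, x 3 * x 2}

lemma x_mem_F (i : ℕ) : x i ∈ F := by
  have h0 : x 0 ∈ F := Subgroup.subset_closure (by simp)
  have h1 : x 1 ∈ F := Subgroup.subset_closure (by simp)
  have hx0 : x₀ ∈ F := by simpa [x] using h0
  have hx1 : x₁ ∈ F := by simpa [x] using h1
  rcases Nat.eq_zero_or_pos i with h | h
  · subst h; exact h0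
  · have : x i = x₀ ^ (i-1) * x₁ * (x₀ ^ (i-1))⁻¹ := by
      simp [x, Nat.pos_iff_ne_zero.mp h]
    rw [this]
    exact mul_mem (mul_mem (pow_mem hx0 _) hx1) (inv_mem (pow_mem hx0 _))

lemma y0_mem_G : x 2 * x 0 ∈ G := Subgroup.subset_closure (by simp)

lemma y1_mem_G : x 2 * x 1 ∈ G := Subgroup.subset_closure (by simp)

/-- The length `|w|` of an element of `F`: the minimal `n` such that `w` is a product of `n`
elements of `{x_i^{±1} : i ≥ 0}`.  This equals the length of the normal form of `w`. -/
def len (w : Equiv.Perm I) : ℕ :=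
  sInf {n | ∃ l : List (Equiv.Perm I), l.length = n ∧
    (∀ a ∈ l, ∃ i : ℕ, a = x i ∨ a = (x i)⁻¹) ∧ l.prod = w}

/-- The element of `F` given by the positive word `x_{i_1} x_{i_2} ⋯ x_{i_n}` (composition from
left to right), where `l = [i_1, i_2, …, i_n]`.  Since Lean's multiplication of permutations is
composition from right to left, this is the Lean product of the reversed list of letters. -/
def pp (l : List ℕ) : Equiv.Perm I := ((l.map x).reverse).prod

/-- `l = [i_1, …, i_n]` encodes a *block*: a positive normal form `x_{i_1}⋯x_{i_n}`
(so `i_1 ≤ ⋯ ≤ i_n`) with `i_1 ≠ i_n` and `i_j < i_1 + j` for all `j = 1, …, n`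
(here with 0-based indexing: `l[k] < l[0] + k + 1`). -/
def IsBlock (l : List ℕ) : Prop :=
  l ≠ [] ∧ l.Pairwise (· ≤ ·) ∧ l.headI ≠ l.getLastD 0 ∧
    ∀ k < l.length, l.getD k 0 < l.headI + k + 1

/-- The double coset `F⃗ a F⃗` of Jones' subgroup.  (As a set this does not depend on the
composition convention, since `u, v` range over all of `F⃗`.) -/
def dCoset (a : Equiv.Perm I) : Set (Equiv.Perm I) :=
  {w | ∃ u ∈ JonesF, ∃ v ∈ JonesF, w = v * a * u}

/-- A real number is dyadic if it has the form `a / 2^n` with `a, n` natural numbers. -/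
def IsDyadic (α : ℝ) : Prop := ∃ (a : ℕ) (n : ℕ), α = a / 2^n

/-- The subgroup of all permutations fixing every point of `U`. -/
def fixing (U : Set ℝ) : Subgroup (Equiv.Perm I) where
  carrier := {g | ∀ t : I, (t : ℝ) ∈ U → g t = t}
  one_mem' := fun _ _ => rfl
  mul_mem' := by
    intro a b ha hb t ht
    simp only [Equiv.Perm.mul_apply]
    rw [hb t ht, ha t ht]
  inv_mem' := by
    intro a ha t ht
    conv_lhs => rw [← ha t ht]
    exact a.symm_apply_apply t

/-- `H_U`: the stabilizer in `F` of the finite set `U ⊂ (0,1)`, i.e. the subgroup of all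
elements of `F` fixing every point of `U`. -/
def HU (U : Set ℝ) : Subgroup (Equiv.Perm I) := F ⊓ fixing U

/-!
Write `w = x_k v` in the paper's notation. Multiplying on the left by `(x_k x_{k+1})⁻¹ ∈ F⃗`
gives `x_{k+1}⁻¹ v`, and the inverse letter is moved to the right through the sorted word `v`
with `x_c⁻¹ x_i = x_i x_{c+1}⁻¹` (`i < c`) and `x_c⁻¹ x_i = x_{i+1} x_c⁻¹` (`i > c`). Either it
cancels against a letter `x_c`, which shortens `w` by two, or it comes out as `v' x_c⁻¹` with
`v'` sorted, `|v'| = |v|`, and `v'` still containing a block: a block of `w` lies either in the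
part of `v` that the letter passed unchanged (if the block started at `x_k`, its tail is a
block there) or in the part whose indices went up by one, because it cannot straddle the point
where the letter stops. Induction on the length gives an element of `F⃗ w F⃗` of length at most
`|w| - 2`, contradicting minimality.
-/

lemma x_zero : x 0 = x₀ := rfl

lemma x_one : x 1 = x₁ := by simp [x]

lemma x_succ_eq (j : ℕ) (hj : 1 ≤ j) : x (j + 1) = x 0 * x j * (x 0)⁻¹ := by
  obtain ⟨m, rfl⟩ : ∃ m, j = m + 1 := ⟨j - 1, by omega⟩
  simp only [x, Nat.add_one_ne_zero, if_false, if_true, Nat.add_sub_cancel, pow_succ']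
  group

lemma le_apply_of_forall_le_apply_eq {g : Equiv.Perm I} {a : ℝ}
    (hg : ∀ u : I, (u : ℝ) ≤ a → g u = u) {s : I} (hs : a ≤ s) : a ≤ g s := by
  by_contra! h
  have hfix : g s = s := g.injective (hg (g s) h.le)
  rw [hfix] at h
  linarith

lemma x_apply_of_le (n : ℕ) (hn : 1 ≤ n) (u : I) (hu : (u : ℝ) ≤ 1 - 1 / 2 ^ n) : x n u = u := by
  induction n, hn using Nat.le_induction generalizing u with
  | base =>
    rw [x_one]
    apply Subtype.ext
    show x1fun u = u
    rw [x1fun, if_pos (by linarith)]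
  | succ n hn ih =>
    have hpow : (1 : ℝ) / 2 ^ n ≤ 1 / 2 ^ 1 := one_div_pow_le_one_div_pow_of_le one_le_two hn
    have hsucc : (1 : ℝ) / 2 ^ (n + 1) = 1 / 2 ^ n / 2 := by rw [pow_succ]; ring
    have hinv : ((x₀⁻¹ u : I) : ℝ) ≤ 1 - 1 / 2 ^ n := by
      show x0inv u ≤ _
      unfold x0inv
      split_ifs <;> linarith
    rw [x_succ_eq n hn, Equiv.Perm.mul_apply, Equiv.Perm.mul_apply, x_zero, ih _ hinv]
    exact x₀.apply_symm_apply u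

-- `x j` is supported in `[3/4, 1]`, where `x₀` and `x₁` agree, so conjugating it by `x 1`
-- has the same effect as conjugating it by `x 0`.
lemma x_one_conj (j : ℕ) (hj : 2 ≤ j) : x 1 * x j * (x 1)⁻¹ = x (j + 1) := by
  have hfix (u : I) (hu : (u : ℝ) ≤ 3 / 4) : x j u = u :=
    x_apply_of_le j (by omega) u
      (by linarith [one_div_pow_le_one_div_pow_of_le (a := (2 : ℝ)) one_le_two hj])
  refine Equiv.ext fun t => ?_
  obtain ⟨ht0, ht1⟩ := t.2
  rcases le_total (t : ℝ) (7 / 8) with ht | ht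
  · have hinv : (((x 1)⁻¹ t : I) : ℝ) ≤ 3 / 4 := by
      rw [x_one]
      show x1inv t ≤ _
      unfold x1inv
      split_ifs <;> linarith
    have hpow : (1 : ℝ) / 2 ^ (j + 1) ≤ 1 / 2 ^ 3 :=
      one_div_pow_le_one_div_pow_of_le one_le_two (by omega)
    rw [Equiv.Perm.mul_apply, Equiv.Perm.mul_apply, hfix _ hinv,
      x_apply_of_le (j + 1) (by omega) t (by linarith)]
    exact (x 1).apply_symm_apply t
  · set s := (x 1)⁻¹ t with hs_def
    have hs : (s : ℝ) = 2 * t - 1 := by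
      rw [hs_def, x_one]
      show x1inv t = _
      unfold x1inv
      split_ifs <;> linarith
    have hs0 : (x 0)⁻¹ t = s := by
      apply Subtype.ext
      rw [hs, x_zero]
      show x0inv t = _
      unfold x0inv
      split_ifs <;> linarith
    have hu : 3 / 4 ≤ (x j s : ℝ) := le_apply_of_forall_le_apply_eq hfix (by linarith)
    rw [x_succ_eq j (by omega)]
    apply Subtype.ext
    simp only [Equiv.Perm.mul_apply, hs0, ← hs_def]
    rw [x_zero, x_one]
    show x1fun _ = x0fun _
    unfold x1fun x0fun
    split_ifs <;> linarith

lemma x_conj (i j : ℕ) (hij : i < j) : x i * x j * (x i)⁻¹ = x (j + 1) := by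
  induction i generalizing j with
  | zero => exact (x_succ_eq j hij).symm
  | succ i ih =>
    rcases Nat.eq_zero_or_pos i with rfl | hi
    · exact x_one_conj j hij
    obtain ⟨j, rfl⟩ : ∃ j', j = j' + 1 := ⟨j - 1, by omega⟩
    calc x (i + 1) * x (j + 1) * (x (i + 1))⁻¹
        = x 0 * (x i * x j * (x i)⁻¹) * (x 0)⁻¹ := by
          rw [x_succ_eq i hi, x_succ_eq j (by omega)]
          group
      _ = x (j + 1 + 1) := by rw [ih j (by omega), x_succ_eq (j + 1) (by omega)]

lemma x_mul_x_inv_of_lt {k c : ℕ} (h : k < c) : x k * (x c)⁻¹ = (x (c + 1))⁻¹ * x k := by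
  rw [← x_conj k c h]
  group

lemma x_mul_x_inv_of_gt {k c : ℕ} (h : c < k) : x k * (x c)⁻¹ = (x c)⁻¹ * x (k + 1) := by
  rw [← x_conj c k h]
  group

lemma x_succ_mul_x_mem_jonesF (c : ℕ) : x (c + 1) * x c ∈ JonesF := by
  induction c using Nat.strong_induction_on with
  | _ c ih =>
    match c with
    | 0 | 1 | 2 => exact Subgroup.subset_closure (by simp)
    | c + 3 =>
      have hconj : (x 1 * x 0) * (x (c + 2) * x (c + 1)) * (x 1 * x 0)⁻¹ =
          x (c + 4) * x (c + 3) :=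
        calc (x 1 * x 0) * (x (c + 2) * x (c + 1)) * (x 1 * x 0)⁻¹
            = x 1 * ((x 0 * x (c + 2) * (x 0)⁻¹) * (x 0 * x (c + 1) * (x 0)⁻¹)) * (x 1)⁻¹ := by
              group
          _ = (x 1 * x (c + 3) * (x 1)⁻¹) * (x 1 * x (c + 2) * (x 1)⁻¹) := by
              rw [x_conj 0 (c + 2) (by omega), x_conj 0 (c + 1) (by omega)]
              group
          _ = x (c + 4) * x (c + 3) := by
              rw [x_conj 1 (c + 3) (by omega), x_conj 1 (c + 2) (by omega)]
      rw [← hconj]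
      exact mul_mem (mul_mem (Subgroup.subset_closure (by simp)) (ih (c + 1) (by omega)))
        (inv_mem (Subgroup.subset_closure (by simp)))

lemma pp_cons (k : ℕ) (T : List ℕ) : pp (k :: T) = pp T * x k := by
  simp [pp]

lemma pp_append (T₁ T₂ : List ℕ) : pp (T₁ ++ T₂) = pp T₂ * pp T₁ := by
  simp [pp]

/-- Exactly the condition for `x_c⁻¹` to move past all of `T` without cancelling. -/
def BelowStaircase (c : ℕ) (T : List ℕ) : Prop :=
  ∀ i < T.length, T.getD i 0 < c + i

lemma belowStaircase_nil (c : ℕ) : BelowStaircase c [] := fun _ h => absurd h (by simp)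

lemma belowStaircase_cons_iff {c k : ℕ} {T : List ℕ} :
    BelowStaircase c (k :: T) ↔ k < c ∧ BelowStaircase (c + 1) T := by
  refine ⟨fun h => ⟨by simpa using h 0 (by simp), fun i hi => ?_⟩, fun ⟨hk, hT⟩ => ?_⟩
  · have := h (i + 1) (by simpa using hi)
    rw [List.getD_cons_succ] at this
    omega
  · rintro (_ | i) hi
    · simpa using hk
    · have := hT i (by simpa using hi)
      rw [List.getD_cons_succ]
      omega

lemma BelowStaircase.mono {c c' : ℕ} {T : List ℕ} (h : BelowStaircase c T) (hc : c ≤ c') :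
    BelowStaircase c' T := fun i hi => (h i hi).trans_le (by omega)

lemma BelowStaircase.of_prefix {c : ℕ} {T₁ T : List ℕ} (h : BelowStaircase c T)
    (hpre : T₁ <+: T) : BelowStaircase c T₁ := by
  obtain ⟨R, rfl⟩ := hpre
  intro i hi
  rw [← List.getD_append _ R _ _ hi]
  exact h i (by simp; omega)

lemma BelowStaircase.headI_lt {c : ℕ} {Z X : List ℕ} (h : BelowStaircase c (Z ++ X))
    (hX : X ≠ []) : X.headI < c + Z.length := by
  obtain ⟨a, X, rfl⟩ := List.exists_cons_of_ne_nil hX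
  have := h Z.length (by simp)
  rwa [List.getD_append_right _ _ _ _ le_rfl, Nat.sub_self, List.getD_cons_zero] at this

lemma pp_mul_x_inv_of_belowStaircase {c : ℕ} {T : List ℕ} (h : BelowStaircase c T) :
    pp T * (x c)⁻¹ = (x (c + T.length))⁻¹ * pp T := by
  induction T generalizing c with
  | nil => simp [pp]
  | cons k T ih =>
    obtain ⟨hk, hT⟩ := belowStaircase_cons_iff.mp h
    rw [pp_cons, mul_assoc, x_mul_x_inv_of_lt hk, ← mul_assoc, ih hT, mul_assoc,
      List.length_cons, add_right_comm c 1, add_assoc]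

lemma pp_mul_x_inv_of_forall_lt {c : ℕ} {T : List ℕ} (h : ∀ m ∈ T, c < m) :
    pp T * (x c)⁻¹ = (x c)⁻¹ * pp (T.map (· + 1)) := by
  induction T with
  | nil => simp [pp]
  | cons k T ih =>
    rw [List.map_cons, pp_cons, pp_cons, mul_assoc, x_mul_x_inv_of_gt (h k (by simp)),
      ← mul_assoc, ih (fun m hm => h m (by simp [hm])), mul_assoc]

/-- Pushing `x_c⁻¹` through a sorted word: it passes a prefix `T₁` and then either cancels
against the next letter or passes all remaining letters, raising each index by one. -/
lemma exists_push_split (c : ℕ) (T : List ℕ) (hT : T.Pairwise (· ≤ ·)) :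
    ∃ T₁ T₂, T = T₁ ++ T₂ ∧ BelowStaircase c T₁ ∧
      ((∃ T₃, T₂ = (c + T₁.length) :: T₃) ∨ ∀ m ∈ T₂, c + T₁.length < m) := by
  induction T generalizing c with
  | nil => exact ⟨[], [], rfl, belowStaircase_nil c, Or.inr (by simp)⟩
  | cons k T ih =>
    obtain ⟨hkT, hT⟩ := List.pairwise_cons.mp hT
    rcases lt_trichotomy k c with hk | rfl | hk
    · obtain ⟨T₁, T₂, rfl, hT₁, hT₂⟩ := ih (c + 1) hT
      refine ⟨k :: T₁, T₂, rfl, belowStaircase_cons_iff.mpr ⟨hk, hT₁⟩, ?_⟩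
      simpa only [List.length_cons, add_assoc, add_comm 1] using hT₂
    · exact ⟨[], k :: T, rfl, belowStaircase_nil k, Or.inl ⟨T, rfl⟩⟩
    · refine ⟨[], k :: T, rfl, belowStaircase_nil c, Or.inr ?_⟩
      simp only [List.length_nil, add_zero, List.mem_cons, forall_eq_or_imp]
      exact ⟨hk, fun m hm => hk.trans_le (hkT m hm)⟩

lemma IsBlock.map_succ {B : List ℕ} (h : IsBlock B) : IsBlock (B.map (· + 1)) := by
  obtain ⟨hne, hsort, hlast, hstep⟩ := h
  obtain ⟨a, B, rfl⟩ := List.exists_cons_of_ne_nil hne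
  refine ⟨by simp, hsort.map _ fun _ _ h => by omega, ?_, fun i hi => ?_⟩
  · rw [List.headI_cons, List.getLastD_cons] at hlast
    rw [List.map_cons, List.headI_cons, List.getLastD_cons,
      List.getLastD_map (f := (· + 1)) (a := a)]
    omega
  · rw [List.length_map] at hi
    have := hstep i hi
    rw [List.getD_eq_getElem _ _ hi] at this
    rw [List.getD_eq_getElem _ _ (by simpa using hi), List.getElem_map]
    simp only [List.map_cons, List.headI_cons] at this ⊢
    omega

lemma IsBlock.headI_le {X Y : List ℕ} (h : IsBlock (X ++ Y)) (hX : X ≠ []) (hY : Y ≠ []) :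
    Y.headI ≤ X.headI + X.length := by
  obtain ⟨a, X, rfl⟩ := List.exists_cons_of_ne_nil hX
  obtain ⟨b, Y, rfl⟩ := List.exists_cons_of_ne_nil hY
  have := h.2.2.2 (a :: X).length (by simp)
  rw [List.getD_append_right _ _ _ _ le_rfl, Nat.sub_self, List.getD_cons_zero] at this
  simp only [List.cons_append, List.headI_cons] at this ⊢
  omega

lemma IsBlock.of_cons {k : ℕ} {B : List ℕ} (h : IsBlock (k :: B))
    (hB : BelowStaircase (k + 1) B) : IsBlock B := by
  obtain ⟨-, hsort, hlast, -⟩ := h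
  have hne : B ≠ [] := by
    rintro rfl
    exact hlast rfl
  obtain ⟨b, B, rfl⟩ := List.exists_cons_of_ne_nil hne
  have hb : b = k := by
    have := (List.pairwise_cons.mp hsort).1 b (by simp)
    have := hB 0 (by simp)
    simp only [List.getD_cons_zero] at this
    omega
  subst hb
  refine ⟨hne, hsort.of_cons, by simpa [List.getLastD_cons] using hlast, fun i hi => ?_⟩
  have := hB i hi
  simp only [List.headI_cons]
  omega

lemma exists_isBlock_infix_of_push {k : ℕ} {T₁ T₂ : List ℕ} (hT₁ : BelowStaircase (k + 1) T₁)
    (hT₂ : ∀ m ∈ T₂, k + 1 + T₁.length < m) {B : List ℕ} (hB : IsBlock B)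
    (hBW : B <:+: k :: (T₁ ++ T₂)) : ∃ B', IsBlock B' ∧ B' <:+: T₁ ++ T₂.map (· + 1) := by
  rw [← List.cons_append] at hBW
  rcases List.infix_append_iff_ne_nil.mp hBW with h | h | ⟨X, Y, hX, hY, rfl, hXs, hYp⟩
  · rcases List.infix_cons_iff.mp h with hpre | hin
    · rcases List.prefix_cons_iff.mp hpre with rfl | ⟨B', rfl, hB'⟩
      · exact absurd rfl hB.1
      · exact ⟨B', hB.of_cons (hT₁.of_prefix hB'), List.infix_append_of_infix_left hB'.isInfix⟩
    · exact ⟨B, hB, List.infix_append_of_infix_left hin⟩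
  · exact ⟨B.map (· + 1), hB.map_succ, List.infix_append_of_infix_right (h.map _)⟩
  · -- a block cannot straddle the point where the pushed letter stops
    exfalso
    obtain ⟨Z, hZ⟩ := hXs
    have hXhead : X.headI < k + 1 + Z.length := by
      have hW : BelowStaircase (k + 1) (k :: T₁) :=
        belowStaircase_cons_iff.mpr ⟨k.lt_succ_self, hT₁.mono (by omega)⟩
      exact (hZ ▸ hW).headI_lt hX
    have hYhead : k + 1 + T₁.length < Y.headI := by
      obtain ⟨b, Y, rfl⟩ := List.exists_cons_of_ne_nil hY
      exact hT₂ b (hYp.subset (by simp))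
    have hlen : Z.length + X.length = T₁.length + 1 := by
      simpa using congrArg List.length hZ
    have := hB.headI_le hX hY
    omega

lemma len_pp_le (T : List ℕ) : len (pp T) ≤ T.length :=
  Nat.sInf_le ⟨(T.map x).reverse, by simp, fun a ha => by
    obtain ⟨i, -, rfl⟩ := List.mem_map.mp (List.mem_reverse.mp ha)
    exact ⟨i, Or.inl rfl⟩, rfl⟩

lemma len_mul_le_of_letter {a : Equiv.Perm I} (ha : ∃ i : ℕ, a = x i ∨ a = (x i)⁻¹)
    (g : Equiv.Perm I) : len (a * g) ≤ len g + 1 := by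
  rcases Set.eq_empty_or_nonempty {n | ∃ M : List (Equiv.Perm I), M.length = n ∧
      (∀ b ∈ M, ∃ i : ℕ, b = x i ∨ b = (x i)⁻¹) ∧ M.prod = g} with h | h
  · -- `len` is `0` on elements that are not products of letters, and then so is `len (a * g)`
    suffices hempty : {n | ∃ M : List (Equiv.Perm I), M.length = n ∧
        (∀ b ∈ M, ∃ i : ℕ, b = x i ∨ b = (x i)⁻¹) ∧ M.prod = a * g} = ∅ by
      rw [len, hempty, Nat.sInf_empty]
      omega
    refine Set.eq_empty_iff_forall_notMem.mpr fun n ⟨M, _, hM, hprod⟩ => ?_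
    refine h.subset ⟨a⁻¹ :: M, rfl, ?_, by rw [List.prod_cons, hprod, inv_mul_cancel_left]⟩
    rintro b (_ | ⟨_, hb⟩)
    · obtain ⟨i, rfl | rfl⟩ := ha
      exacts [⟨i, Or.inr rfl⟩, ⟨i, Or.inl (inv_inv _)⟩]
    · exact hM b hb
  · obtain ⟨M, hlen, hM, hprod⟩ := Nat.sInf_mem h
    refine Nat.sInf_le ⟨a :: M, by simp [hlen, len], ?_, by rw [List.prod_cons, hprod]⟩
    rintro b (_ | ⟨_, hb⟩)
    · exact ha
    · exact hM b hb

lemma pairwise_append_map_succ {T₁ T₂ : List ℕ} (h : (T₁ ++ T₂).Pairwise (· ≤ ·)) :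
    (T₁ ++ T₂.map (· + 1)).Pairwise (· ≤ ·) := by
  obtain ⟨h₁, h₂, h₁₂⟩ := List.pairwise_append.mp h
  refine List.pairwise_append.mpr ⟨h₁, h₂.map _ fun _ _ h => by omega, ?_⟩
  simp only [List.mem_map]
  rintro a ha _ ⟨b, hb, rfl⟩
  exact (h₁₂ a ha b hb).trans b.le_succ

theorem exists_mem_jonesF_len_mul_add_two_le (W : List ℕ) (hW : W.Pairwise (· ≤ ·))
    (hB : ∃ B, IsBlock B ∧ B <:+: W) : ∃ g ∈ JonesF, len (pp W * g) + 2 ≤ W.length := by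
  induction hn : W.length using Nat.strong_induction_on generalizing W with
  | _ n ih =>
    obtain ⟨B, hB, hBW⟩ := hB
    obtain ⟨k, T, rfl⟩ : ∃ k T, W = k :: T := by
      cases W with
      | nil => exact absurd (List.eq_nil_of_infix_nil hBW) hB.1
      | cons k T => exact ⟨k, T, rfl⟩
    have hT := hW.of_cons
    have hpair := inv_mem (x_succ_mul_x_mem_jonesF k)
    have hstep : pp (k :: T) * (x (k + 1) * x k)⁻¹ = pp T * (x (k + 1))⁻¹ := by
      rw [pp_cons]
      group
    obtain ⟨T₁, T₂, rfl, hT₁, ⟨T₃, rfl⟩ | hT₂⟩ := exists_push_split (k + 1) T hT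
    · refine ⟨_, hpair, ?_⟩
      have hcancel : pp (k :: (T₁ ++ (k + 1 + T₁.length) :: T₃)) * (x (k + 1) * x k)⁻¹ =
          pp (T₁ ++ T₃) := by
        rw [hstep, pp_append, pp_cons, mul_assoc, pp_mul_x_inv_of_belowStaircase hT₁, pp_append]
        group
      rw [hcancel]
      have := len_pp_le (T₁ ++ T₃)
      simp only [List.length_append, List.length_cons] at this hn ⊢
      omega
    · obtain ⟨g, hg, hlen⟩ := ih _ (by simp [← hn]) _ (pairwise_append_map_succ hT)
        (exists_isBlock_infix_of_push hT₁ hT₂ hB hBW) rfl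
      refine ⟨_, mul_mem hpair hg, ?_⟩
      have hpush : pp (k :: (T₁ ++ T₂)) * ((x (k + 1) * x k)⁻¹ * g) =
          (x (k + 1 + T₁.length))⁻¹ * (pp (T₁ ++ T₂.map (· + 1)) * g) := by
        rw [← mul_assoc, hstep, pp_append, mul_assoc (pp T₂), pp_mul_x_inv_of_belowStaircase hT₁,
          ← mul_assoc, pp_mul_x_inv_of_forall_lt hT₂, pp_append]
        group
      rw [hpush]
      have :=
        len_mul_le_of_letter ⟨k + 1 + T₁.length, Or.inr rfl⟩ (pp (T₁ ++ T₂.map (· + 1)) * g)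
      simp only [List.length_append, List.length_map, List.length_cons] at this hlen hn ⊢
      omega

theorem stmt9_general (a : Equiv.Perm I) (l : List ℕ) (hsort : l.Pairwise (· ≤ ·))
    (hmem : pp l ∈ dCoset a) (hlen : l.length = len (pp l))
    (hmin : ∀ w' ∈ dCoset a, len (pp l) ≤ len w') :
    ∀ l₁ l₂ l₃ : List ℕ, l = l₁ ++ l₂ ++ l₃ → ¬ IsBlock l₂ := by
  rintro l₁ l₂ l₃ rfl hblock
  obtain ⟨u, hu, v, hv, hw⟩ := hmem
  obtain ⟨g, hg, hshort⟩ :=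
    exists_mem_jonesF_len_mul_add_two_le _ hsort ⟨l₂, hblock, List.infix_append _ _ _⟩
  have hcoset : pp (l₁ ++ l₂ ++ l₃) * g ∈ dCoset a :=
    ⟨u * g, mul_mem hu hg, v, hv, by rw [hw, mul_assoc, mul_assoc]⟩
  have := hmin _ hcoset
  omega

/-- Let `C = F⃗ a F⃗` be a double coset of Jones' subgroup in `F`, and let
`w = x_{i_1}⋯x_{i_n}` (with `i_1 ≤ ⋯ ≤ i_n`, encoded by the list `l`, and `n = |w|`) be a
positive element of `C` of minimal length among elements of `C`.  Then no contiguous subword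
of `w` is a block. -/
theorem stmt9 (a : Equiv.Perm I) (ha : a ∈ F) (l : List ℕ) (hsort : l.Pairwise (· ≤ ·))
    (hmem : pp l ∈ dCoset a) (hlen : l.length = len (pp l))
    (hmin : ∀ w' ∈ dCoset a, len (pp l) ≤ len w') :
    ∀ l₁ l₂ l₃ : List ℕ, l = l₁ ++ l₂ ++ l₃ → ¬ IsBlock l₂ :=
  stmt9_general a l hsort hmem hlen hmin
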